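/- Let α, β > 0 and (v, θ, ω) ∈ ℝ³ with H₁(v,θ,ω) = 0 and H₂(v,θ,ω) ≠ 0. Then ω ≠ 0 and v ≠ 0, and with t₁ = |ω|/α, t₂ = |v|/β and s₁, s₂ ∈ {−1,1} satisfying s₁·ω = −|ω| and s₂·v = −|v|, the two-phase final state equations hold: ω + s₁αt₁ = 0, v + s₂βt₂ = 0, and θ + ωt₁ + s₁αt₁²/2 + (ω + s₁αt₁)t₂ = 0. -/

import Mathlib

/-!
Since `H₂ = H₁ / (2α) + ω|v|/β`, the hypotheses `H₁ = 0` and `H₂ ≠ 0` force `ω|v|/β ≠ 0`, so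
`ω`, `v` and `β` are nonzero. For `x ≠ 0`, `s x = -|x|` gives `s |x| = -x`, so each phase of
duration `|x| / a` at rate `s a` brings `x` to zero. The heading after the angular phase is
`H₁ / (2α)`, and the linear phase no longer turns, since the angular velocity is then zero.
-/

noncomputable def H1 (α v θ ω : ℝ) : ℝ := 2 * α * θ + ω * |ω|

noncomputable def H2 (α β v θ ω : ℝ) : ℝ := ω * |ω| / (2 * α) + θ + ω * |v| / β

lemma H2_eq_H1_div_add {α β v θ ω : ℝ} (hα : α ≠ 0) :
    H2 α β v θ ω = H1 α v θ ω / (2 * α) + ω * |v| / β := by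
  unfold H1 H2
  field_simp
  ring

lemma mul_abs_div_ne_zero_of_H1_eq_zero {α β v θ ω : ℝ} (hα : α ≠ 0)
    (hH1 : H1 α v θ ω = 0) (hH2 : H2 α β v θ ω ≠ 0) : ω * |v| / β ≠ 0 := by
  simpa [H2_eq_H1_div_add hα, hH1] using hH2

lemma mul_abs_eq_neg_of_mul_eq_neg_abs {s x : ℝ} (hx : x ≠ 0) (h : s * x = -|x|) :
    s * |x| = -x := by
  apply mul_right_cancel₀ hx
  calc s * |x| * x = |x| * (s * x) := by ring
    _ = -(|x| * |x|) := by rw [h]; ring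
    _ = -x * x := by rw [abs_mul_abs_self]; ring

lemma add_mul_mul_abs_div_eq_zero {a s x : ℝ} (ha : a ≠ 0) (hx : x ≠ 0)
    (h : s * x = -|x|) : x + s * a * (|x| / a) = 0 := by
  field_simp
  linear_combination mul_abs_eq_neg_of_mul_eq_neg_abs hx h

lemma heading_after_angular_phase {α v θ ω s : ℝ} (hα : α ≠ 0) (hs : s * |ω| = -ω) :
    θ + ω * (|ω| / α) + s * α * (|ω| / α) ^ 2 / 2 = H1 α v θ ω / (2 * α) := by
  unfold H1
  field_simp
  linear_combination |ω| * hs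

theorem stmt8_general (α β v θ ω : ℝ) (hα : 0 < α)
    (hH1 : H1 α v θ ω = 0) (hH2 : H2 α β v θ ω ≠ 0)
    (t₁ t₂ : ℝ) (ht₁ : t₁ = |ω| / α) (ht₂ : t₂ = |v| / β)
    (s₁ s₂ : ℝ)
    (hs₁ω : s₁ * ω = -|ω|) (hs₂v : s₂ * v = -|v|) :
    ω ≠ 0 ∧ v ≠ 0 ∧
    ω + s₁ * α * t₁ = 0 ∧
    v + s₂ * β * t₂ = 0 ∧
    θ + ω * t₁ + s₁ * α * t₁ ^ 2 / 2 + (ω + s₁ * α * t₁) * t₂ = 0 := by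
  obtain ⟨⟨hω, hv⟩, hβ⟩ : (ω ≠ 0 ∧ v ≠ 0) ∧ β ≠ 0 := by
    simpa [not_or] using mul_abs_div_ne_zero_of_H1_eq_zero hα.ne' hH1 hH2
  have hω_final : ω + s₁ * α * t₁ = 0 := ht₁ ▸ add_mul_mul_abs_div_eq_zero hα.ne' hω hs₁ω
  refine ⟨hω, hv, hω_final, ht₂ ▸ add_mul_mul_abs_div_eq_zero hβ hv hs₂v, ?_⟩
  rw [hω_final, zero_mul, add_zero, ht₁,
    heading_after_angular_phase hα.ne' (mul_abs_eq_neg_of_mul_eq_neg_abs hω hs₁ω), hH1, zero_div]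

theorem stmt8 (α β v θ ω : ℝ) (hα : 0 < α) (hβ : 0 < β)
    (hH1 : H1 α v θ ω = 0) (hH2 : H2 α β v θ ω ≠ 0)
    (t₁ t₂ : ℝ) (ht₁ : t₁ = |ω| / α) (ht₂ : t₂ = |v| / β)
    (s₁ s₂ : ℝ) (hs₁ : s₁ = -1 ∨ s₁ = 1) (hs₂ : s₂ = -1 ∨ s₂ = 1)
    (hs₁ω : s₁ * ω = -|ω|) (hs₂v : s₂ * v = -|v|) :
    ω ≠ 0 ∧ v ≠ 0 ∧
    ω + s₁ * α * t₁ = 0 ∧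
    v + s₂ * β * t₂ = 0 ∧
    θ + ω * t₁ + s₁ * α * t₁ ^ 2 / 2 + (ω + s₁ * α * t₁) * t₂ = 0 :=
  stmt8_general α β v θ ω hα hH1 hH2 t₁ t₂ ht₁ ht₂ s₁ s₂ hs₁ω hs₂v
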